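/- Let p_1,...,p_s ∈ ℝ[x_1,...,x_n] be polynomials of even degree with top-degree homogeneous parts p_1^g,...,p_s^g. Suppose that for every x ∈ ℝ^n \ {0} there exists an index i with p_i^g(x) < 0. Then there exist sums of squares σ_1,...,σ_s such that the polynomial σ_1 p_1 + ... + σ_s p_s has even degree and its top-degree homogeneous part is strictly negative on ℝ^n \ {0}. -/
import Mathlib


open MvPolynomial

/-- A sum of squares of polynomials. -/
def IsSOS {σ : Type*} (p : MvPolynomial σ ℝ) : Prop :=
  ∃ (k : ℕ) (q : Fin k → MvPolynomial σ ℝ), p = ∑ i, (q i) ^ 2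

lemma isSOS_zero {σ : Type*} : IsSOS (0 : MvPolynomial σ ℝ) :=
  ⟨0, fun i => 0, by simp⟩

lemma isSOS_sq {σ : Type*} (q : MvPolynomial σ ℝ) : IsSOS (q ^ 2) :=
  ⟨1, fun _ => q, by simp⟩

lemma IsSOS.mul {σ : Type*} {p q : MvPolynomial σ ℝ} (hp : IsSOS p) (hq : IsSOS q) :
    IsSOS (p * q) := by
  obtain ⟨k, a, rfl⟩ := hp
  obtain ⟨l, b, rfl⟩ := hq
  refine ⟨k * l, fun i => a (finProdFinEquiv.symm i).1 * b (finProdFinEquiv.symm i).2, ?_⟩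
  have h1 : (∑ pr : Fin k × Fin l, (a pr.1 * b pr.2) ^ 2)
      = ∑ i : Fin (k * l), (a (finProdFinEquiv.symm i).1 * b (finProdFinEquiv.symm i).2) ^ 2 :=
    Fintype.sum_equiv finProdFinEquiv _ _ (fun pr => by simp)
  rw [Finset.sum_mul_sum, ← h1, Fintype.sum_prod_type]
  simp [mul_pow]

lemma isSOS_one {σ : Type*} : IsSOS (1 : MvPolynomial σ ℝ) :=
  ⟨1, fun _ => 1, by simp⟩

lemma IsSOS.pow {σ : Type*} {p : MvPolynomial σ ℝ} (hp : IsSOS p) (m : ℕ) : IsSOS (p ^ m) := by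
  induction m with
  | zero => simpa using isSOS_one
  | succ m ih => rw [pow_succ]; exact ih.mul hp

lemma eval_smul_of_isHomogeneous {σ : Type*} [Fintype σ] {φ : MvPolynomial σ ℝ} {m : ℕ}
    (h : φ.IsHomogeneous m) (t : ℝ) (x : σ → ℝ) :
    eval (t • x) φ = t ^ m * eval x φ := by
  rw [eval_eq, eval_eq, Finset.mul_sum]
  refine Finset.sum_congr rfl fun d hd => ?_
  have hdeg : d.degree = m := by
    have := h (mem_support_iff.mp hd)
    rwa [Finsupp.degree_eq_weight_one]
  have hprod : (∏ i ∈ d.support, (t • x) i ^ d i)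
      = (∏ i ∈ d.support, t ^ d i) * ∏ i ∈ d.support, x i ^ d i := by
    rw [← Finset.prod_mul_distrib]
    exact Finset.prod_congr rfl fun i _ => by simp [mul_pow]
  have htpow : (∏ i ∈ d.support, t ^ d i) = t ^ m := by
    rw [Finset.prod_pow_eq_pow_sum, ← hdeg]; rfl
  rw [hprod, htpow]; ring

lemma homogeneousComponent_mul_of_isHomogeneous {σ : Type*} {h q : MvPolynomial σ ℝ} {a b : ℕ}
    (hh : h.IsHomogeneous a) :
    homogeneousComponent (a + b) (h * q) = h * homogeneousComponent b q := by
  conv_lhs => rw [← sum_homogeneousComponent q]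
  rw [Finset.mul_sum, map_sum]
  have key : ∀ j : ℕ, homogeneousComponent (a + b) (h * homogeneousComponent j q)
      = if b = j then h * homogeneousComponent j q else 0 := by
    intro j
    have hmem : h * homogeneousComponent j q ∈ homogeneousSubmodule σ ℝ (a + j) :=
      (mem_homogeneousSubmodule _ _).mpr (hh.mul (homogeneousComponent_isHomogeneous j q))
    rw [homogeneousComponent_of_mem hmem]
    simp [Nat.add_right_cancel_iff, add_right_inj]
  simp_rw [key]
  rw [Finset.sum_ite_eq]
  split_ifs with hb
  · rfl
  · have : q.totalDegree < b := by
      simp only [Finset.mem_range, not_lt] at hb; omega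
    rw [homogeneousComponent_eq_zero _ _ this, mul_zero]

lemma key_ineq (s : ℕ) (C M δ : ℝ) (hC : 0 ≤ C) (hM : 0 < M) (hδ : 0 < δ) (K : ℕ)
    (hK : (s : ℝ) * C * M / (δ * δ) < K) :
    (s : ℝ) * C * M ^ K < δ * (M + δ) ^ K := by
  have h0 : (0:ℝ) < M ^ K := by positivity
  have hdM : (0:ℝ) ≤ δ / M := by positivity
  have hbern : 1 + (K : ℝ) * (δ / M) ≤ (1 + δ / M) ^ K :=
    one_add_mul_le_pow (by linarith) K
  have hmp : (1 + δ / M) ^ K * M ^ K = (M + δ) ^ K := by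
    rw [← mul_pow]
    congr 1
    field_simp
  have hscm : (s : ℝ) * C * M < (K : ℝ) * (δ * δ) := by
    rw [div_lt_iff₀ (by positivity)] at hK
    linarith
  have h1 : (s : ℝ) * C < δ * (1 + (K : ℝ) * (δ / M)) := by
    have h2 : δ * ((K : ℝ) * (δ / M)) = (K : ℝ) * (δ * δ) / M := by
      field_simp
    have h3 : (s : ℝ) * C < (K : ℝ) * (δ * δ) / M := by
      rw [lt_div_iff₀ hM]; linarith
    nlinarith
  calc (s : ℝ) * C * M ^ K < δ * (1 + (K : ℝ) * (δ / M)) * M ^ K := by nlinarith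
    _ ≤ δ * (1 + δ / M) ^ K * M ^ K :=
        mul_le_mul_of_nonneg_right (mul_le_mul_of_nonneg_left hbern hδ.le) h0.le
    _ = δ * ((1 + δ / M) ^ K * M ^ K) := by ring
    _ = δ * (M + δ) ^ K := by rw [hmp]


lemma sum_bound (s : ℕ) (φ : Fin s → ℝ) (C M δ : ℝ) (hC : 0 ≤ C) (hM : C < M)
    (hδ : 0 < δ) (K : ℕ) (hb : ∀ i, |φ i| ≤ C) (i₁ : Fin s) (hi₁ : φ i₁ ≤ -δ)
    (hkey : (s : ℝ) * C * M ^ K < δ * (M + δ) ^ K) :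
    ∑ i, (M - φ i) ^ K * φ i < 0 := by
  have hMpos : 0 < M := lt_of_le_of_lt hC hM
  rw [← Finset.add_sum_erase _ _ (Finset.mem_univ i₁)]
  have hterm1 : (M - φ i₁) ^ K * φ i₁ ≤ (M + δ) ^ K * (-δ) := by
    have h1 : M + δ ≤ M - φ i₁ := by linarith
    have h1' : (0:ℝ) ≤ M + δ := by linarith
    have h2 : (M + δ) ^ K ≤ (M - φ i₁) ^ K := pow_le_pow_left₀ h1' h1 K
    have h3 : (0:ℝ) ≤ (M - φ i₁) ^ K := le_trans (by positivity) h2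
    calc (M - φ i₁) ^ K * φ i₁ ≤ (M - φ i₁) ^ K * (-δ) := by nlinarith
      _ ≤ (M + δ) ^ K * (-δ) := by nlinarith
  have hterm2 : ∀ i ∈ Finset.univ.erase i₁, (M - φ i) ^ K * φ i ≤ M ^ K * C := by
    intro i _
    have hC1 : φ i ≤ C := (abs_le.mp (hb i)).2
    have hC2 : -C ≤ φ i := (abs_le.mp (hb i)).1
    by_cases hsgn : φ i ≤ 0
    · have h1 : (0:ℝ) ≤ (M - φ i) ^ K := by apply pow_nonneg; linarith
      have h2 : (M - φ i) ^ K * φ i ≤ 0 := mul_nonpos_of_nonneg_of_nonpos h1 hsgn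
      have h3 : (0:ℝ) ≤ M ^ K * C := by positivity
      linarith
    · push_neg at hsgn
      have h1 : (0:ℝ) ≤ M - φ i := by linarith
      have h2 : M - φ i ≤ M := by linarith
      have h3 : (M - φ i) ^ K ≤ M ^ K := pow_le_pow_left₀ h1 h2 K
      have h4 : (0:ℝ) ≤ (M - φ i) ^ K := by positivity
      nlinarith
  have hsum2 : ∑ i ∈ Finset.univ.erase i₁, (M - φ i) ^ K * φ i ≤ (s : ℝ) * (M ^ K * C) := by
    calc ∑ i ∈ Finset.univ.erase i₁, (M - φ i) ^ K * φ i
        ≤ (Finset.univ.erase i₁).card • (M ^ K * C) :=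
          Finset.sum_le_card_nsmul _ _ _ hterm2
      _ = ((Finset.univ.erase i₁).card : ℝ) * (M ^ K * C) := by rw [nsmul_eq_mul]
      _ ≤ (s : ℝ) * (M ^ K * C) := by
          have hcard : (Finset.univ.erase i₁).card ≤ s := by
            calc (Finset.univ.erase i₁).card ≤ (Finset.univ : Finset (Fin s)).card :=
                  Finset.card_le_card (Finset.erase_subset _ _)
              _ = s := by simp
          have h5 : (0:ℝ) ≤ M ^ K * C := by positivity
          have hcast : ((Finset.univ.erase i₁).card : ℝ) ≤ (s : ℝ) := by exact_mod_cast hcard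
          nlinarith
  nlinarith [hkey]

/-- If `p_1, …, p_s` have even degree and at every nonzero direction some top-degree
homogeneous part `p_i^g` is negative, then some combination `σ_1 p_1 + ⋯ + σ_s p_s`
with sums of squares `σ_i` has even degree and top-degree part strictly negative
off the origin. -/
theorem exists_negative_at_infinity (n s : ℕ) (p : Fin s → MvPolynomial (Fin n) ℝ)
    (hdeg : ∀ i, Even (p i).totalDegree)
    (hneg : ∀ x : Fin n → ℝ, x ≠ 0 → ∃ i,
      eval x (homogeneousComponent (p i).totalDegree (p i)) < 0) :
    ∃ τ : Fin s → MvPolynomial (Fin n) ℝ,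
      (∀ i, IsSOS (τ i)) ∧
      Even (∑ i, τ i * p i).totalDegree ∧
      (∀ x : Fin n → ℝ, x ≠ 0 →
        eval x (homogeneousComponent (∑ i, τ i * p i).totalDegree (∑ i, τ i * p i)) < 0) := by
  classical
  by_cases htriv : ∀ x : Fin n → ℝ, x = 0
  · exact ⟨fun _ => 0, fun i => isSOS_zero, by simp,
      fun x hx => absurd (htriv x) hx⟩
  push_neg at htriv
  obtain ⟨x₀, hx₀⟩ := htriv
  have hs : Nonempty (Fin s) := ⟨(hneg x₀ hx₀).choose⟩
  -- basic notation
  set d : Fin s → ℕ := fun i => (p i).totalDegree with hd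
  set c : Fin s → ℕ := fun i => (p i).totalDegree / 2 with hcdef
  have hc : ∀ i, 2 * c i = d i := fun i => Nat.two_mul_div_two_of_even (hdeg i)
  set E : ℕ := Finset.univ.sup c with hE
  have hcE : ∀ i, c i ≤ E := fun i => Finset.le_sup (Finset.mem_univ i)
  set R : MvPolynomial (Fin n) ℝ := ∑ j, X j ^ 2 with hRdef
  have hR : R.IsHomogeneous 2 := by
    rw [hRdef]
    refine IsHomogeneous.sum _ _ _ fun j _ => ?_
    simpa using (isHomogeneous_X ℝ j).pow 2
  have hRSOS : IsSOS R := ⟨n, fun j => X j, rfl⟩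
  have evalR : ∀ x : Fin n → ℝ, eval x R = ∑ j, (x j) ^ 2 := by
    intro x; simp [hRdef]
  set f : Fin s → MvPolynomial (Fin n) ℝ :=
    fun i => homogeneousComponent (d i) (p i) with hfdef
  set F : Fin s → MvPolynomial (Fin n) ℝ := fun i => R ^ (E - c i) * f i with hFdef
  have hFhom : ∀ i, (F i).IsHomogeneous (2 * E) := by
    intro i
    have h1 : (F i).IsHomogeneous (2 * (E - c i) + d i) :=
      (hR.pow (E - c i)).mul (homogeneousComponent_isHomogeneous (d i) (p i))
    have h2 : 2 * (E - c i) + d i = 2 * E := by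
      have := hc i; have := hcE i; omega
    rwa [h2] at h1
  -- positivity of the sum of squares off 0
  have hρpos : ∀ x : Fin n → ℝ, x ≠ 0 → 0 < ∑ j, (x j) ^ 2 := by
    intro x hx
    obtain ⟨j, hj⟩ := Function.ne_iff.mp hx
    exact Finset.sum_pos' (fun j _ => sq_nonneg _)
      ⟨j, Finset.mem_univ j, lt_of_le_of_ne (sq_nonneg _) (Ne.symm (pow_ne_zero 2 hj))⟩
  -- normalization to the sphere
  set S : Set (Fin n → ℝ) := {x | ∑ j, (x j) ^ 2 = 1} with hSdef
  have hSne : ∀ x : Fin n → ℝ, x ≠ 0 →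
      ∃ t : ℝ, 0 < t ∧ t • x ∈ S := by
    intro x hx
    have h0 : 0 < ∑ j, (x j) ^ 2 := hρpos x hx
    refine ⟨(Real.sqrt (∑ j, (x j) ^ 2))⁻¹, inv_pos.mpr (Real.sqrt_pos.mpr h0), ?_⟩
    have hsq : Real.sqrt (∑ j, (x j) ^ 2) ^ 2 = ∑ j, (x j) ^ 2 :=
      Real.sq_sqrt h0.le
    have hsqrtpos : 0 < Real.sqrt (∑ j, (x j) ^ 2) := Real.sqrt_pos.mpr h0
    simp only [hSdef, Set.mem_setOf_eq, Pi.smul_apply, smul_eq_mul, mul_pow]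
    rw [← Finset.mul_sum, inv_pow, hsq]
    exact inv_mul_cancel₀ h0.ne'
  have hSnonzero : ∀ x ∈ S, x ≠ 0 := by
    intro x hxS hx0
    rw [hSdef] at hxS
    simp [hx0] at hxS
  -- compactness of the sphere
  have hScompact : IsCompact S := by
    have hcont : Continuous fun x : Fin n → ℝ => ∑ j, (x j) ^ 2 := by
      continuity
    have hclosed : IsClosed S := isClosed_eq hcont continuous_const
    have hbdd : S ⊆ Metric.closedBall 0 1 := by
      intro x hxS
      rw [Metric.mem_closedBall, dist_pi_le_iff zero_le_one]
      intro j
      have h1 : (x j) ^ 2 ≤ 1 := by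
        rw [hSdef, Set.mem_setOf_eq] at hxS
        calc (x j) ^ 2 ≤ ∑ j', (x j') ^ 2 :=
              Finset.single_le_sum (f := fun j' => (x j') ^ 2)
                (fun j' _ => sq_nonneg _) (Finset.mem_univ j)
          _ = 1 := hxS
      rw [Real.dist_eq, Pi.zero_apply, sub_zero]
      exact abs_le.mpr ⟨by nlinarith, by nlinarith⟩
    exact Metric.isCompact_iff_isClosed_bounded.mpr
      ⟨hclosed, (Metric.isBounded_closedBall).subset hbdd⟩
  obtain ⟨t₀, ht₀, hy₀⟩ := hSne x₀ hx₀
  have hSnonempty : S.Nonempty := ⟨t₀ • x₀, hy₀⟩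
  -- uniform bound C on the sphere
  obtain ⟨C0, hC0⟩ := hScompact.exists_bound_of_continuousOn
    (f := fun x => fun i : Fin s => eval x (f i))
    (Continuous.continuousOn (by
      exact continuous_pi fun i => MvPolynomial.continuous_eval (f i)))
  set C : ℝ := max C0 0 with hCdef
  have hCnonneg : 0 ≤ C := le_max_right _ _
  have hCbound : ∀ x ∈ S, ∀ i, |eval x (f i)| ≤ C := by
    intro x hx i
    calc |eval x (f i)| = ‖(fun i : Fin s => eval x (f i)) i‖ := rfl
      _ ≤ ‖fun i : Fin s => eval x (f i)‖ := norm_le_pi_norm (fun i : Fin s => eval x (f i)) i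
      _ ≤ C0 := hC0 x hx
      _ ≤ C := le_max_left _ _
  -- uniform negativity δ on the sphere
  have hne : (Finset.univ : Finset (Fin s)).Nonempty := Finset.univ_nonempty
  have hmcont : Continuous fun x : Fin n → ℝ =>
      Finset.univ.inf' hne fun i => eval x (f i) :=
    Continuous.finset_inf'_apply hne fun i _ => MvPolynomial.continuous_eval (f i)
  obtain ⟨z, hzS, hzmax⟩ := hScompact.exists_isMaxOn hSnonempty hmcont.continuousOn
  set δ : ℝ := -(Finset.univ.inf' hne fun i => eval z (f i)) with hδdef
  have hδpos : 0 < δ := by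
    obtain ⟨i, hi⟩ := hneg z (hSnonzero z hzS)
    have hle : (Finset.univ.inf' hne fun i => eval z (f i)) ≤ eval z (f i) :=
      Finset.inf'_le _ (Finset.mem_univ i)
    have hlt : eval z (f i) < 0 := hi
    simp only [hδdef]
    linarith
  have hδ : ∀ x ∈ S, ∃ i, eval x (f i) ≤ -δ := by
    intro x hx
    obtain ⟨i, _, hieq⟩ := Finset.exists_mem_eq_inf' hne fun i => eval x (f i)
    refine ⟨i, ?_⟩
    rw [← hieq, hδdef, neg_neg]
    exact hzmax hx
  set M : ℝ := C + 1 with hMdef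
  have hMpos : 0 < M := by positivity
  -- choose the exponent K
  obtain ⟨k, hk⟩ := exists_nat_gt ((s : ℝ) * C * M / (δ * δ))
  set K : ℕ := k * 2 with hKdef
  have hkK : (s : ℝ) * C * M / (δ * δ) < K := by
    have hKk : (k : ℝ) ≤ (K : ℝ) := by
      have : k ≤ K := by omega
      exact_mod_cast this
    linarith
  have hkey : (s : ℝ) * C * M ^ K < δ * (M + δ) ^ K :=
    key_ineq s C M δ hCnonneg hMpos hδpos K hkK
  -- define the multipliers
  set σp : Fin s → MvPolynomial (Fin n) ℝ :=
    fun i => (MvPolynomial.C M * R ^ E - F i) ^ K with hσdef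
  set τ : Fin s → MvPolynomial (Fin n) ℝ := fun i => σp i * R ^ (E - c i) with hτdef
  have hσhom : ∀ i, (σp i).IsHomogeneous (2 * E * K) := by
    intro i
    have hbase : (MvPolynomial.C M * R ^ E - F i).IsHomogeneous (2 * E) := by
      have h1 : (MvPolynomial.C M * R ^ E).IsHomogeneous (0 + 2 * E) :=
        (isHomogeneous_C _ _).mul (by simpa [mul_comm] using hR.pow E)
      rw [zero_add] at h1
      exact h1.sub (hFhom i)
    exact hbase.pow K
  have hτhom : ∀ i, (τ i).IsHomogeneous (2 * E * K + 2 * (E - c i)) :=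
    fun i => (hσhom i).mul (by simpa [mul_comm] using hR.pow (E - c i))
  have hτSOS : ∀ i, IsSOS (τ i) := by
    intro i
    have h2 : σp i = ((MvPolynomial.C M * R ^ E - F i) ^ k) ^ 2 := pow_mul _ k 2
    show IsSOS (σp i * R ^ (E - c i))
    rw [h2]
    exact (isSOS_sq _).mul (hRSOS.pow _)
  set T : ℕ := 2 * E * K + 2 * E with hTdef
  set Q : MvPolynomial (Fin n) ℝ := ∑ i, τ i * p i with hQdef
  set G : MvPolynomial (Fin n) ℝ := ∑ i, τ i * f i with hGdef
  have hGhom : G.IsHomogeneous T := by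
    rw [hGdef]
    refine IsHomogeneous.sum _ _ _ fun i _ => ?_
    have h1 := (hτhom i).mul (homogeneousComponent_isHomogeneous (d i) (p i))
    have h2 : 2 * E * K + 2 * (E - c i) + d i = T := by
      have := hc i; have := hcE i; omega
    rwa [h2] at h1
  have hcomp : homogeneousComponent T Q = G := by
    rw [hQdef, map_sum, hGdef]
    refine Finset.sum_congr rfl fun i _ => ?_
    have h2 : T = (2 * E * K + 2 * (E - c i)) + d i := by
      have := hc i; have := hcE i; omega
    rw [h2, homogeneousComponent_mul_of_isHomogeneous (hτhom i)]
  -- evaluation of G on the sphere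
  have hGS : ∀ x ∈ S, eval x G < 0 := by
    intro x hxS
    have hx1 : eval x R = 1 := by rw [evalR]; exact hxS
    have hevalF : ∀ i, eval x (F i) = eval x (f i) := by
      intro i; rw [hFdef]; simp [hx1]
    have hevalτf : ∀ i, eval x (τ i * f i) = (M - eval x (f i)) ^ K * eval x (f i) := by
      intro i
      rw [hτdef, hσdef]
      simp [hx1, hevalF i]
    rw [hGdef, map_sum]
    simp_rw [hevalτf]
    obtain ⟨i₁, hi₁⟩ := hδ x hxS
    have hMgt : C < M := by rw [hMdef]; linarith
    exact sum_bound s (fun i => eval x (f i)) C M δ hCnonneg hMgt hδpos K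
      (fun i => hCbound x hxS i) i₁ hi₁ hkey
  -- evaluation of G off the origin
  have hGneg : ∀ x : Fin n → ℝ, x ≠ 0 → eval x G < 0 := by
    intro x hx
    obtain ⟨t, ht, htS⟩ := hSne x hx
    have h1 : eval (t⁻¹ • (t • x)) G = (t⁻¹) ^ T * eval (t • x) G :=
      eval_smul_of_isHomogeneous hGhom t⁻¹ (t • x)
    have h2 : t⁻¹ • (t • x) = x := by
      rw [smul_smul, inv_mul_cancel₀ (ne_of_gt ht), one_smul]
    rw [h2] at h1
    have h3 : eval (t • x) G < 0 := hGS _ htS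
    rw [h1]
    have h4 : (0:ℝ) < (t⁻¹) ^ T := by positivity
    exact mul_neg_of_pos_of_neg h4 h3
  -- G is nonzero, so Q has total degree T
  have hGne : G ≠ 0 := by
    intro h0
    have := hGneg x₀ hx₀
    rw [h0] at this
    simp at this
  have hdegQ : Q.totalDegree = T := by
    refine le_antisymm ?_ ?_
    · rw [hQdef]
      refine le_trans (totalDegree_finset_sum _ _) ?_
      refine Finset.sup_le fun i _ => ?_
      refine le_trans (totalDegree_mul _ _) ?_
      have h1 : (τ i).totalDegree ≤ 2 * E * K + 2 * (E - c i) :=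
        (hτhom i).totalDegree_le
      have h2 : (p i).totalDegree = d i := rfl
      have := hc i; have := hcE i
      rw [hTdef]; omega
    · by_contra hlt
      push_neg at hlt
      have := homogeneousComponent_eq_zero T Q hlt
      rw [hcomp] at this
      exact hGne this
  refine ⟨τ, hτSOS, ?_, ?_⟩
  · rw [← hQdef, hdegQ, hTdef]
    exact ⟨E * K + E, by ring⟩
  · intro x hx
    rw [← hQdef, hdegQ, hcomp]
    exact hGneg x hx
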